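/- arXiv:2510.23613 — 4 statements merged into one kernel-verified Lean document; each statement's English description precedes it below -/
import Mathlib

section
/- If P is a left perm algebra and A is an associative algebra, then the tensor product P ⊗ A equipped with the products (p⊗a) ⊢ (q⊗b) := (p∘q) ⊗ (ab) and (p⊗a) ⊣ (q⊗b) := (q∘p) ⊗ (ab) is a dialgebra: both products are associative and satisfy x⊣(y⊣z) = x⊣(y⊢z), (x⊣y)⊢z = (x⊢y)⊢z, and x⊢(y⊣z) = (x⊢y)⊣z. -/
open TensorProduct

/-- If `P` is a left perm algebra and `A` an associative algebra, then `P ⊗ A`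
with `(p⊗a) ⊢ (q⊗b) = (p∘q)⊗(ab)` and `(p⊗a) ⊣ (q⊗b) = (q∘p)⊗(ab)` is a
dialgebra: both products are associative and the three compatibility
identities hold. -/
theorem permTensorAlgebra_isDialgebra (k : Type*) [Field k]
    (P A : Type*) [AddCommGroup P] [Module k P] [AddCommGroup A] [Module k A]
    (m : P →ₗ[k] P →ₗ[k] P)
    (hm_assoc : ∀ x y z : P, m (m x y) z = m x (m y z))
    (hm_perm : ∀ x y z : P, m (m x y) z = m (m y x) z)
    (n : A →ₗ[k] A →ₗ[k] A)
    (hn_assoc : ∀ x y z : A, n (n x y) z = n x (n y z)) :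
    -- `vdash (p ⊗ a) (q ⊗ b) = (m p q) ⊗ (n a b)`, `dashv (p ⊗ a) (q ⊗ b) = (m q p) ⊗ (n a b)`
    let vdash := TensorProduct.map₂ m n
    let dashv := TensorProduct.map₂ m.flip n
    (∀ x y z : P ⊗[k] A, vdash (vdash x y) z = vdash x (vdash y z)) ∧
    (∀ x y z : P ⊗[k] A, dashv (dashv x y) z = dashv x (dashv y z)) ∧
    (∀ x y z : P ⊗[k] A, dashv x (dashv y z) = dashv x (vdash y z)) ∧
    (∀ x y z : P ⊗[k] A, vdash (dashv x y) z = vdash (vdash x y) z) ∧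
    (∀ x y z : P ⊗[k] A, vdash x (dashv y z) = dashv (vdash x y) z) := by
  intro vdash dashv
  refine ⟨?_, ?_, ?_, ?_, ?_⟩ <;>
  · intro x y z
    induction x using TensorProduct.induction_on with
    | zero => simp
    | add x₁ x₂ h₁ h₂ => simp [map_add, h₁, h₂]
    | tmul p a =>
      induction y using TensorProduct.induction_on with
      | zero => simp
      | add y₁ y₂ h₁ h₂ => simp [map_add, h₁, h₂]
      | tmul q b =>
        induction z using TensorProduct.induction_on with
        | zero => simp
        | add z₁ z₂ h₁ h₂ => simp [map_add, h₁, h₂]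
        | tmul r c =>
          simp only [vdash, dashv, TensorProduct.map₂_apply_tmul,
            TensorProduct.map_tmul, LinearMap.flip_apply]
          first
          | (rw [hm_assoc, hn_assoc]; done)
          | (rw [← hm_assoc, hn_assoc]; done)
          | (rw [hm_perm]; done)
          | (rw [← hm_assoc, hm_perm]; done)
          | (rw [← hm_assoc, hm_perm, hm_assoc, hn_assoc]; done)
end

section
/- Let D = P ⊗ A be the tensor product dialgebra of the perm algebra P = k[x]⊗k[x] and a unital associative algebra A with basis {u_k}. For any derivation d of D, writing d(p ⊗ 1) = Σ_k d_k(p) ⊗ u_k with coordinate functions d_k : P → P, each coordinate function d_k is a derivation of the perm algebra P, i.e., d_k(p • q) = d_k(p) • q + p • d_k(q). -/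
open TensorProduct Polynomial

/-- The perm product `P ∘ Q := P(0)·Q` on `k[x]`, as a bilinear map. -/
noncomputable def permMul (k : Type*) [Field k] :
    Polynomial k →ₗ[k] Polynomial k →ₗ[k] Polynomial k :=
  (LinearMap.mul k (Polynomial k)).comp
    ((Algebra.linearMap k (Polynomial k)).comp (Polynomial.leval 0))

/-- The perm product on `P = k[x] ⊗ k[x]`:
`(P ⊗ f) • (Q ⊗ g) = (P(0)·Q) ⊗ (f·g)`. -/
noncomputable def bullet (k : Type*) [Field k] :
    Polynomial k ⊗[k] Polynomial k →ₗ[k]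
      Polynomial k ⊗[k] Polynomial k →ₗ[k] Polynomial k ⊗[k] Polynomial k :=
  TensorProduct.map₂ (permMul k) (LinearMap.mul k (Polynomial k))

/-- The product `⊢` on `D = (k[x] ⊗ k[x]) ⊗ A`: `(p ⊗ a) ⊢ (q ⊗ b) = (p • q) ⊗ (a b)`. -/
noncomputable def vdash (k : Type*) [Field k] (A : Type*) [Ring A] [Algebra k A] :
    (Polynomial k ⊗[k] Polynomial k) ⊗[k] A →ₗ[k]
      (Polynomial k ⊗[k] Polynomial k) ⊗[k] A →ₗ[k]
        (Polynomial k ⊗[k] Polynomial k) ⊗[k] A :=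
  TensorProduct.map₂ (bullet k) (LinearMap.mul k A)

/-- The product `⊣` on `D = (k[x] ⊗ k[x]) ⊗ A`: `(p ⊗ a) ⊣ (q ⊗ b) = (q • p) ⊗ (a b)`. -/
noncomputable def dashv (k : Type*) [Field k] (A : Type*) [Ring A] [Algebra k A] :
    (Polynomial k ⊗[k] Polynomial k) ⊗[k] A →ₗ[k]
      (Polynomial k ⊗[k] Polynomial k) ⊗[k] A →ₗ[k]
        (Polynomial k ⊗[k] Polynomial k) ⊗[k] A :=
  TensorProduct.map₂ (bullet k).flip (LinearMap.mul k A)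

lemma lmap_finsum {R M N α : Type*} [Semiring R] [AddCommMonoid M] [AddCommMonoid N]
    [Module R M] [Module R N] (g : M →ₗ[R] N) {f : α → M}
    (hf : (Function.support f).Finite) : g (∑ᶠ i, f i) = ∑ᶠ i, g (f i) := by
  have := g.toAddMonoidHom.map_finsum hf
  simpa using this

/-- For a derivation `d` of `D = P ⊗ A` and a basis `{u_k}` of `A`, the
coordinate functions `d_k` determined by `d(p ⊗ 1) = Σ_k d_k(p) ⊗ u_k`
are derivations of the perm algebra `P`. -/
theorem coordinate_functions_are_perm_derivations (k : Type*) [Field k]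
    (A : Type*) [Ring A] [Algebra k A]
    (ι : Type*) (b : Module.Basis ι k A)
    (d : (Polynomial k ⊗[k] Polynomial k) ⊗[k] A →ₗ[k]
        (Polynomial k ⊗[k] Polynomial k) ⊗[k] A)
    (hd1 : ∀ x y, d (vdash k A x y) = vdash k A (d x) y + vdash k A x (d y))
    (hd2 : ∀ x y, d (dashv k A x y) = dashv k A (d x) y + dashv k A x (d y))
    (dk : ι → (Polynomial k ⊗[k] Polynomial k →ₗ[k] Polynomial k ⊗[k] Polynomial k))
    (hfin : ∀ p : Polynomial k ⊗[k] Polynomial k, {i : ι | dk i p ≠ 0}.Finite)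
    (hcoord : ∀ p : Polynomial k ⊗[k] Polynomial k,
      d (p ⊗ₜ[k] (1 : A)) = ∑ᶠ i : ι, (dk i p) ⊗ₜ[k] (b i)) :
    ∀ (i : ι) (p q : Polynomial k ⊗[k] Polynomial k),
      dk i (bullet k p q) = bullet k (dk i p) q + bullet k p (dk i q) := by
  intro i p q
  classical
  -- projection onto the i-th coordinate
  set φ : (Polynomial k ⊗[k] Polynomial k) ⊗[k] A →ₗ[k] Polynomial k ⊗[k] Polynomial k :=
    (TensorProduct.rid k _).toLinearMap ∘ₗ LinearMap.lTensor _ (b.coord i) with hφ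
  have hφt : ∀ (c : Polynomial k ⊗[k] Polynomial k) (j : ι),
      φ (c ⊗ₜ[k] b j) = if j = i then c else 0 := by
    intro c j
    simp only [hφ, LinearMap.comp_apply, LinearMap.lTensor_tmul, LinearEquiv.coe_coe,
      TensorProduct.rid_tmul, Module.Basis.coord_apply, Module.Basis.repr_self, Finsupp.single_apply]
    split <;> simp
  have hvd : ∀ (r s : Polynomial k ⊗[k] Polynomial k) (a c : A),
      vdash k A (r ⊗ₜ[k] a) (s ⊗ₜ[k] c) = bullet k r s ⊗ₜ[k] (a * c) := by
    intro r s a c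
    simp [vdash, TensorProduct.map₂]
  have key := hd1 (p ⊗ₜ[k] (1 : A)) (q ⊗ₜ[k] (1 : A))
  rw [hvd, one_mul, hcoord, hcoord, hcoord] at key
  -- push the bilinear maps inside the finsums
  have h1 : vdash k A (∑ᶠ j : ι, dk j p ⊗ₜ[k] b j) (q ⊗ₜ[k] (1 : A))
      = ∑ᶠ j : ι, bullet k (dk j p) q ⊗ₜ[k] b j := by
    rw [show vdash k A (∑ᶠ j : ι, dk j p ⊗ₜ[k] b j) (q ⊗ₜ[k] (1 : A))
        = (vdash k A).flip (q ⊗ₜ[k] (1 : A)) (∑ᶠ j : ι, dk j p ⊗ₜ[k] b j) from rfl,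
      lmap_finsum _ ((hfin p).subset (by
        intro j hj
        simp only [Set.mem_setOf_eq] at hj ⊢
        intro h0
        simp [h0] at hj))]
    refine finsum_congr fun j => ?_
    simp [hvd]
  have h2 : vdash k A (p ⊗ₜ[k] (1 : A)) (∑ᶠ j : ι, dk j q ⊗ₜ[k] b j)
      = ∑ᶠ j : ι, bullet k p (dk j q) ⊗ₜ[k] b j := by
    rw [lmap_finsum _ ((hfin q).subset (by
        intro j hj
        simp only [Set.mem_setOf_eq] at hj ⊢
        intro h0
        simp [h0] at hj))]
    refine finsum_congr fun j => ?_
    simp [hvd]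
  rw [h1, h2] at key
  have keyφ := congrArg φ key
  have hproj : ∀ (f : ι → Polynomial k ⊗[k] Polynomial k),
      {j : ι | f j ≠ 0}.Finite → φ (∑ᶠ j : ι, f j ⊗ₜ[k] b j) = f i := by
    intro f hf
    rw [lmap_finsum _ (hf.subset (by
        intro j hj
        simp only [Set.mem_setOf_eq] at hj ⊢
        intro h0
        simp [h0] at hj))]
    rw [finsum_eq_single _ i (by intro j hj; rw [hφt]; simp [hj]), hφt, if_pos rfl]
  rw [map_add, hproj _ (hfin _),
    hproj _ ((hfin p).subset (fun j hj => by
      simp only [Set.mem_setOf_eq] at hj ⊢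
      intro h0; simp [h0] at hj)),
    hproj _ ((hfin q).subset (fun j hj => by
      simp only [Set.mem_setOf_eq] at hj ⊢
      intro h0; simp [h0] at hj))] at keyφ
  exact keyφ
end

section
/- Let D = P ⊗ A as above and δ a diderivation of D. Writing δ(p ⊗ 1) = Σ_k δ_k(p) ⊗ u_k with coordinate functions δ_k : P → P, each δ_k is a left derivation of the perm algebra P, i.e., δ_k(p • q) = q • δ_k(p) + p • δ_k(q) for all p, q ∈ P. -/
open TensorProduct Polynomial

/-- For a diderivation `δ` of `D = P ⊗ A` and a basis `{u_k}` of `A`, the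
coordinate functions `δ_k` determined by `δ(p ⊗ 1) = Σ_k δ_k(p) ⊗ u_k`
are left derivations of the perm algebra `P`. -/
theorem dider_coordinate_functions_are_left_derivations (k : Type*) [Field k]
    (A : Type*) [Ring A] [Algebra k A]
    (ι : Type*) (b : Module.Basis ι k A)
    (δ : (Polynomial k ⊗[k] Polynomial k) ⊗[k] A →ₗ[k]
        (Polynomial k ⊗[k] Polynomial k) ⊗[k] A)
    (hδ1 : ∀ x y, δ (vdash k A x y) = dashv k A (δ x) y + vdash k A x (δ y))
    (hδ2 : ∀ x y, δ (dashv k A x y) = dashv k A (δ x) y + vdash k A x (δ y))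
    (dk : ι → (Polynomial k ⊗[k] Polynomial k →ₗ[k] Polynomial k ⊗[k] Polynomial k))
    (hfin : ∀ p : Polynomial k ⊗[k] Polynomial k, {i : ι | dk i p ≠ 0}.Finite)
    (hcoord : ∀ p : Polynomial k ⊗[k] Polynomial k,
      δ (p ⊗ₜ[k] (1 : A)) = ∑ᶠ i : ι, (dk i p) ⊗ₜ[k] (b i)) :
    ∀ (i : ι) (p q : Polynomial k ⊗[k] Polynomial k),
      dk i (bullet k p q) = bullet k q (dk i p) + bullet k p (dk i q) := by
  classical
  intro i p q
  -- the coordinate-extraction map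
  set φ : (Polynomial k ⊗[k] Polynomial k) ⊗[k] A →ₗ[k] Polynomial k ⊗[k] Polynomial k :=
    (TensorProduct.rid k (Polynomial k ⊗[k] Polynomial k)).toLinearMap ∘ₗ
      LinearMap.lTensor (Polynomial k ⊗[k] Polynomial k) (b.coord i) with hphi
  have hφt : ∀ (x : Polynomial k ⊗[k] Polynomial k) (j : ι),
      φ (x ⊗ₜ[k] b j) = if j = i then x else 0 := by
    intro x j
    simp only [hphi, LinearMap.coe_comp, Function.comp_apply, LinearMap.lTensor_tmul,
      Module.Basis.coord_apply, Module.Basis.repr_self, LinearEquiv.coe_coe, TensorProduct.rid_tmul,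
      Finsupp.single_apply]
    split
    · exact one_smul k x
    · exact zero_smul k x
  have hsum : ∀ g : ι → Polynomial k ⊗[k] Polynomial k,
      (Function.support fun j => g j ⊗ₜ[k] b j).Finite →
      φ (∑ᶠ j, g j ⊗ₜ[k] b j) = g i := by
    intro g hg
    have h1 : φ (∑ᶠ j, g j ⊗ₜ[k] b j) = ∑ᶠ j, φ (g j ⊗ₜ[k] b j) :=
      φ.toAddMonoidHom.map_finsum hg
    rw [h1, finsum_eq_single _ i (fun j hj => by rw [hφt]; simp [hj]), hφt]
    simp
  have hsupp : ∀ (g : ι → Polynomial k ⊗[k] Polynomial k)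
      (f : ι → Polynomial k ⊗[k] Polynomial k),
      (∀ j, g j = 0 → f j = 0) → {j | g j ≠ 0}.Finite →
      (Function.support fun j => f j ⊗ₜ[k] b j).Finite := by
    intro g f hgf hg
    refine hg.subset ?_
    intro j hj
    simp only [Function.mem_support, Set.mem_setOf_eq] at *
    intro h0
    exact hj (by rw [hgf j h0]; exact TensorProduct.zero_tmul _ _)
  have key := hδ1 (p ⊗ₜ[k] (1 : A)) (q ⊗ₜ[k] (1 : A))
  have hvd : vdash k A (p ⊗ₜ[k] (1 : A)) (q ⊗ₜ[k] (1 : A))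
      = (bullet k p q) ⊗ₜ[k] (1 : A) := by
    rw [vdash, TensorProduct.map₂_apply_tmul, TensorProduct.map_tmul]
    simp
  rw [hvd, hcoord, hcoord p, hcoord q] at key
  have h1 : dashv k A (∑ᶠ j, dk j p ⊗ₜ[k] b j) (q ⊗ₜ[k] (1 : A))
      = ∑ᶠ j, (bullet k q (dk j p)) ⊗ₜ[k] b j := by
    have e : dashv k A (∑ᶠ j, dk j p ⊗ₜ[k] b j) (q ⊗ₜ[k] (1 : A))
        = ∑ᶠ j, dashv k A (dk j p ⊗ₜ[k] b j) (q ⊗ₜ[k] (1 : A)) :=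
      ((dashv k A).flip (q ⊗ₜ[k] (1 : A))).toAddMonoidHom.map_finsum
        (hsupp (fun j => dk j p) _ (fun j h => by simp [h]) (hfin p))
    rw [e]
    refine finsum_congr fun j => ?_
    rw [dashv, TensorProduct.map₂_apply_tmul, TensorProduct.map_tmul]
    simp
  have h2 : vdash k A (p ⊗ₜ[k] (1 : A)) (∑ᶠ j, dk j q ⊗ₜ[k] b j)
      = ∑ᶠ j, (bullet k p (dk j q)) ⊗ₜ[k] b j := by
    have e : vdash k A (p ⊗ₜ[k] (1 : A)) (∑ᶠ j, dk j q ⊗ₜ[k] b j)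
        = ∑ᶠ j, vdash k A (p ⊗ₜ[k] (1 : A)) (dk j q ⊗ₜ[k] b j) :=
      (vdash k A (p ⊗ₜ[k] (1 : A))).toAddMonoidHom.map_finsum
        (hsupp (fun j => dk j q) _ (fun j h => by simp [h]) (hfin q))
    rw [e]
    refine finsum_congr fun j => ?_
    rw [vdash, TensorProduct.map₂_apply_tmul, TensorProduct.map_tmul]
    simp
  rw [h1, h2] at key
  have key2 := congrArg φ key
  rw [map_add,
    hsum _ (hsupp (fun j => dk j (bullet k p q)) _ (fun j h => by simp [h])
      (hfin (bullet k p q))),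
    hsum _ (hsupp (fun j => dk j p) _ (fun j h => by simp [h]) (hfin p)),
    hsum _ (hsupp (fun j => dk j q) _ (fun j h => by simp [h]) (hfin q))] at key2
  exact key2
end

section
/- Let D = P ⊗ A as above and δ a diderivation of D. Writing δ(1 ⊗ a) = Σ_{(i,k)} x^{i} ⊗ δ_{(i,k)}(a) in terms of the monomial basis of P = k[x]⊗k[x] and coordinate maps δ_{(i,k)} : A → A, each coordinate map δ_{(i,k)} is a derivation of the associative algebra A. -/
open TensorProduct Polynomial

set_option maxHeartbeats 1000000 in
set_option synthInstance.maxHeartbeats 400000 in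
/-- For a diderivation `δ` of `D = P ⊗ A`, the coordinate maps `δ_i : A → A`
determined by `δ(1 ⊗ a) = Σ_i x^i ⊗ δ_i(a)` (over the monomial basis
`x^i = x^{i₁} ⊗ x^{i₂}` of `P`) are derivations of the associative algebra `A`. -/
theorem dider_coordinate_maps_are_algebra_derivations (k : Type*) [Field k]
    (A : Type*) [Ring A] [Algebra k A]
    (δ : (Polynomial k ⊗[k] Polynomial k) ⊗[k] A →ₗ[k]
        (Polynomial k ⊗[k] Polynomial k) ⊗[k] A)
    (hδ1 : ∀ x y, δ (vdash k A x y) = dashv k A (δ x) y + vdash k A x (δ y))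
    (hδ2 : ∀ x y, δ (dashv k A x y) = dashv k A (δ x) y + vdash k A x (δ y))
    (c : ℕ × ℕ → (A →ₗ[k] A))
    (hfin : ∀ a : A, {i : ℕ × ℕ | c i a ≠ 0}.Finite)
    (hcoord : ∀ a : A,
      δ (((1 : Polynomial k) ⊗ₜ[k] (1 : Polynomial k)) ⊗ₜ[k] a) =
        ∑ᶠ i : ℕ × ℕ, ((Polynomial.X ^ i.1 : Polynomial k) ⊗ₜ[k]
          (Polynomial.X ^ i.2 : Polynomial k)) ⊗ₜ[k] (c i a)) :
    ∀ (i : ℕ × ℕ) (a b : A), c i (a * b) = c i a * b + a * c i b := by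
  classical
  intro j a b
  set E : Polynomial k ⊗[k] Polynomial k := (1 : Polynomial k) ⊗ₜ[k] (1 : Polynomial k) with hE
  -- coordinate extraction map
  set f : Polynomial k ⊗[k] Polynomial k →ₗ[k] k :=
    (TensorProduct.lid k k).toLinearMap ∘ₗ
      TensorProduct.map (Polynomial.lcoeff k j.1) (Polynomial.lcoeff k j.2) with hf
  set φ : (Polynomial k ⊗[k] Polynomial k) ⊗[k] A →ₗ[k] A :=
    (TensorProduct.lid k A).toLinearMap ∘ₗ (f.rTensor A) with hφdef
  have hφ : ∀ (i : ℕ × ℕ) (u : A),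
      φ (((Polynomial.X ^ i.1 : Polynomial k) ⊗ₜ[k] (Polynomial.X ^ i.2 : Polynomial k)) ⊗ₜ[k] u)
        = if i = j then u else 0 := by
    intro i u
    simp only [hφdef, hf, LinearMap.comp_apply, LinearMap.rTensor_tmul,
      TensorProduct.map_tmul, Polynomial.lcoeff_apply, Polynomial.coeff_X_pow,
      LinearEquiv.coe_coe, TensorProduct.lid_tmul, TensorProduct.smul_tmul',
      smul_eq_mul]
    by_cases h1 : j.1 = i.1
    · by_cases h2 : j.2 = i.2
      · have : i = j := Prod.ext h1.symm h2.symm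
        simp [h1, h2, this]
      · have : ¬ i = j := fun h => h2 (by rw [h])
        simp [h1, h2, this]
    · have : ¬ i = j := fun h => h1 (by rw [h])
      simp [h1, this]
  -- φ of a coordinate expansion gives the j-th coordinate
  have hext : ∀ (g : ℕ × ℕ → A), (Function.support g).Finite →
      φ (∑ᶠ i : ℕ × ℕ, ((Polynomial.X ^ i.1 : Polynomial k) ⊗ₜ[k]
        (Polynomial.X ^ i.2 : Polynomial k)) ⊗ₜ[k] g i) = g j := by
    intro g hg
    have hsup : (Function.support fun i : ℕ × ℕ =>
        ((Polynomial.X ^ i.1 : Polynomial k) ⊗ₜ[k]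
          (Polynomial.X ^ i.2 : Polynomial k)) ⊗ₜ[k] g i).Finite := by
      refine hg.subset ?_
      intro i hi
      simp only [Function.mem_support] at hi ⊢
      intro h0
      exact hi (by rw [h0, TensorProduct.tmul_zero])
    have hmap : φ (∑ᶠ i : ℕ × ℕ, ((Polynomial.X ^ i.1 : Polynomial k) ⊗ₜ[k]
        (Polynomial.X ^ i.2 : Polynomial k)) ⊗ₜ[k] g i)
        = ∑ᶠ i : ℕ × ℕ, φ (((Polynomial.X ^ i.1 : Polynomial k) ⊗ₜ[k]
          (Polynomial.X ^ i.2 : Polynomial k)) ⊗ₜ[k] g i) :=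
      φ.toAddMonoidHom.map_finsum hsup
    rw [hmap]
    have : ∀ i : ℕ × ℕ, φ
        (((Polynomial.X ^ i.1 : Polynomial k) ⊗ₜ[k]
          (Polynomial.X ^ i.2 : Polynomial k)) ⊗ₜ[k] g i)
        = if i = j then g j else 0 := by
      intro i
      rw [hφ]
      by_cases h : i = j <;> simp [h]
    rw [finsum_congr this, finsum_eq_single _ j (fun x hx => by simp [hx])]
    simp
  -- key multiplication facts for simple tensors
  have hbul : ∀ p : Polynomial k ⊗[k] Polynomial k, bullet k E p = p := by
    intro p
    induction p using TensorProduct.induction_on with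
    | zero => simp
    | tmul u v =>
        simp [hE, bullet, permMul, Polynomial.leval_apply, Algebra.linearMap_apply]
    | add x y hx hy => simp [hx, hy]
  have hvd : ∀ (u : A) (q : (Polynomial k ⊗[k] Polynomial k) ⊗[k] A),
      vdash k A (E ⊗ₜ[k] u) q
        = TensorProduct.map LinearMap.id (LinearMap.mul k A u) q := by
    intro u q
    induction q using TensorProduct.induction_on with
    | zero => simp
    | tmul p v => simp [vdash, hbul]
    | add x y hx hy => simp [hx, hy]
  have hdv : ∀ (u : A) (q : (Polynomial k ⊗[k] Polynomial k) ⊗[k] A),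
      dashv k A q (E ⊗ₜ[k] u)
        = TensorProduct.map LinearMap.id ((LinearMap.mul k A).flip u) q := by
    intro u q
    induction q using TensorProduct.induction_on with
    | zero => simp
    | tmul p v => simp [dashv, hbul]
    | add x y hx hy => simp [hx, hy]
  -- the main identity
  have key := hδ1 (E ⊗ₜ[k] a) (E ⊗ₜ[k] b)
  have hEE : vdash k A (E ⊗ₜ[k] a) (E ⊗ₜ[k] b) = E ⊗ₜ[k] (a * b) := by
    rw [hvd]; simp
  rw [hEE, hcoord (a * b), hcoord a, hcoord b, hdv, hvd] at key
  -- supports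
  have hsa : (Function.support fun i : ℕ × ℕ =>
      ((Polynomial.X ^ i.1 : Polynomial k) ⊗ₜ[k]
        (Polynomial.X ^ i.2 : Polynomial k)) ⊗ₜ[k] (c i a)).Finite := by
    refine (hfin a).subset ?_
    intro i hi
    simp only [Function.mem_support, Set.mem_setOf_eq] at hi ⊢
    intro h0; exact hi (by rw [h0, TensorProduct.tmul_zero])
  have hsb : (Function.support fun i : ℕ × ℕ =>
      ((Polynomial.X ^ i.1 : Polynomial k) ⊗ₜ[k]
        (Polynomial.X ^ i.2 : Polynomial k)) ⊗ₜ[k] (c i b)).Finite := by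
    refine (hfin b).subset ?_
    intro i hi
    simp only [Function.mem_support, Set.mem_setOf_eq] at hi ⊢
    intro h0; exact hi (by rw [h0, TensorProduct.tmul_zero])
  have hmapa : TensorProduct.map LinearMap.id ((LinearMap.mul k A).flip b)
      (∑ᶠ i : ℕ × ℕ, ((Polynomial.X ^ i.1 : Polynomial k) ⊗ₜ[k]
        (Polynomial.X ^ i.2 : Polynomial k)) ⊗ₜ[k] (c i a))
      = ∑ᶠ i : ℕ × ℕ, TensorProduct.map LinearMap.id ((LinearMap.mul k A).flip b)
        (((Polynomial.X ^ i.1 : Polynomial k) ⊗ₜ[k]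
          (Polynomial.X ^ i.2 : Polynomial k)) ⊗ₜ[k] (c i a)) :=
    (TensorProduct.map LinearMap.id ((LinearMap.mul k A).flip b)).toAddMonoidHom.map_finsum hsa
  have hmapb : TensorProduct.map LinearMap.id (LinearMap.mul k A a)
      (∑ᶠ i : ℕ × ℕ, ((Polynomial.X ^ i.1 : Polynomial k) ⊗ₜ[k]
        (Polynomial.X ^ i.2 : Polynomial k)) ⊗ₜ[k] (c i b))
      = ∑ᶠ i : ℕ × ℕ, TensorProduct.map LinearMap.id (LinearMap.mul k A a)
        (((Polynomial.X ^ i.1 : Polynomial k) ⊗ₜ[k]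
          (Polynomial.X ^ i.2 : Polynomial k)) ⊗ₜ[k] (c i b)) :=
    (TensorProduct.map LinearMap.id (LinearMap.mul k A a)).toAddMonoidHom.map_finsum hsb
  rw [hmapa, hmapb] at key
  have ha' : ∀ i : ℕ × ℕ,
      TensorProduct.map LinearMap.id ((LinearMap.mul k A).flip b)
        (((Polynomial.X ^ i.1 : Polynomial k) ⊗ₜ[k]
          (Polynomial.X ^ i.2 : Polynomial k)) ⊗ₜ[k] (c i a))
      = ((Polynomial.X ^ i.1 : Polynomial k) ⊗ₜ[k]
          (Polynomial.X ^ i.2 : Polynomial k)) ⊗ₜ[k] (c i a * b) := by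
    intro i; simp
  have hb' : ∀ i : ℕ × ℕ,
      TensorProduct.map LinearMap.id (LinearMap.mul k A a)
        (((Polynomial.X ^ i.1 : Polynomial k) ⊗ₜ[k]
          (Polynomial.X ^ i.2 : Polynomial k)) ⊗ₜ[k] (c i b))
      = ((Polynomial.X ^ i.1 : Polynomial k) ⊗ₜ[k]
          (Polynomial.X ^ i.2 : Polynomial k)) ⊗ₜ[k] (a * c i b) := by
    intro i; simp
  rw [finsum_congr ha', finsum_congr hb'] at key
  -- apply φ to both sides
  have s1 : (Function.support fun i : ℕ × ℕ => c i (a * b)).Finite :=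
    (hfin (a * b)).subset (fun i hi => hi)
  have s2 : (Function.support fun i : ℕ × ℕ => c i a * b).Finite := by
    refine (hfin a).subset ?_
    intro i hi
    simp only [Function.mem_support, Set.mem_setOf_eq] at hi ⊢
    intro h0; exact hi (by rw [h0, zero_mul])
  have s3 : (Function.support fun i : ℕ × ℕ => a * c i b).Finite := by
    refine (hfin b).subset ?_
    intro i hi
    simp only [Function.mem_support, Set.mem_setOf_eq] at hi ⊢
    intro h0; exact hi (by rw [h0, mul_zero])
  have := congrArg φ key
  rw [map_add, hext _ s1, hext _ s2, hext _ s3] at this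
  exact this
end
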